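/- arXiv:2302.12105 — 3 statements merged into one kernel-verified Lean document; each statement's English description precedes it below -/
import Mathlib

section
/- Let f(x) = g(x) + γ|x|₁ with g : ℝⁿ → ℝ C¹, μ-strongly convex, and ∇g L-Lipschitz (L > μ > 0), γ > 0. Fix x ∈ ℝⁿ, set h = 1/L and xᵗᵉᵐᵖ = x − h∂⁻f(x). If sign(xᵢᵗᵉᵐᵖ · xᵢ) ≥ 0 for all i = 1,…,n, then f(xᵗᵉᵐᵖ) − f(x*) ≤ (1 − μ/L)(f(x) − f(x*)), where x* is the unique minimizer of f. -/
open scoped RealInnerProductSpace BigOperators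
open scoped Classical

noncomputable section

abbrev E (n : ℕ) := EuclideanSpace ℝ (Fin n)

/-- The convex-analysis subdifferential. -/
def subdiff {n : ℕ} (f : E n → ℝ) (x : E n) : Set (E n) :=
  {y | ∀ z, f z ≥ f x + (inner ℝ y (z - x) : ℝ)}

/-- `v` is the minimal-Euclidean-norm element of `∂f(x)`. -/
def IsMinNormSubgrad {n : ℕ} (f : E n → ℝ) (x v : E n) : Prop :=
  v ∈ subdiff f x ∧ ∀ y ∈ subdiff f x, ‖v‖ ≤ ‖y‖

/-- μ-strong convexity: `x ↦ f x - μ/2 ‖x‖²` is convex. -/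
def StronglyConvex {n : ℕ} (μ : ℝ) (f : E n → ℝ) : Prop :=
  ConvexOn ℝ Set.univ (fun x => f x - μ / 2 * ‖x‖ ^ 2)

/-!
Write `v = ∇g(x) + s` with `s ∈ γ ∂|·|₁(x)`. Wherever `xᵢ = 0` the entry `sᵢ` may be moved freely
in `[-γ, γ]` without leaving `∂f(x)`, so minimality of `‖v‖` forces `sᵢ vᵢ = -γ |vᵢ|`; together
with the sign condition this gives `⟪s, x - v/L⟫ = γ |x - v/L|₁`, i.e. along the step the `ℓ¹`
term of `f` is the linear function `⟪s, ·⟫`. The descent lemma for the `L`-smooth function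
`g + ⟪s, ·⟫`, whose gradient at `x` is `v`, then gives `f(x - v/L) ≤ f(x) - ‖v‖²/(2L)`, while
strong convexity of `f` gives the Polyak–Łojasiewicz bound `f(x) - f(x*) ≤ ‖v‖²/(2μ)`.
-/

open Filter Topology Set

lemma StrongConvexOn.add_convexOn {F : Type*} [NormedAddCommGroup F] [NormedSpace ℝ F]
    {s : Set F} {m : ℝ} {f g : F → ℝ} (hf : StrongConvexOn s m f) (hg : ConvexOn ℝ s g) :
    StrongConvexOn s m (f + g) := by
  have h := hf.add (uniformConvexOn_zero.2 hg)
  rwa [add_zero] at h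

section InnerProductSpace

variable {F : Type*} [NormedAddCommGroup F] [InnerProductSpace ℝ F]

lemma StrongConvexOn.apply_add_smul_sub_le {f : F → ℝ} {m t : ℝ} (hf : StrongConvexOn univ m f)
    (ht₀ : 0 ≤ t) (ht₁ : t ≤ 1) (x z : F) :
    f (x + t • (z - x)) ≤ f x + t * (f z - f x) - m / 2 * (t * (1 - t) * ‖z - x‖ ^ 2) := by
  have h := hf.2 (mem_univ x) (mem_univ z) (sub_nonneg.2 ht₁) ht₀ (by ring)
  rw [show (1 - t) • x + t • z = x + t • (z - x) by module, norm_sub_rev] at h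
  simp only [smul_eq_mul] at h
  linarith

lemma ConvexOn.apply_add_smul_sub_le {f : F → ℝ} {t : ℝ} (hf : ConvexOn ℝ univ f)
    (ht₀ : 0 ≤ t) (ht₁ : t ≤ 1) (x z : F) : f (x + t • (z - x)) ≤ f x + t * (f z - f x) := by
  simpa using (strongConvexOn_zero.2 hf).apply_add_smul_sub_le ht₀ ht₁ x z

lemma HasGradientAt.tendsto_slope_zero_right [CompleteSpace F] {g : F → ℝ} {G x : F}
    (hG : HasGradientAt g G x) (d : F) :
    Tendsto (fun t : ℝ => t⁻¹ * (g (x + t • d) - g x)) (𝓝[>] 0) (𝓝 ⟪G, d⟫) :=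
  (hG.hasFDerivAt.hasLineDerivAt d).tendsto_slope_zero_right

lemma ConvexOn.add_inner_le_of_hasGradientAt [CompleteSpace F] {g : F → ℝ} {G x : F}
    (hg : ConvexOn ℝ univ g) (hG : HasGradientAt g G x) (z : F) : g x + ⟪G, z - x⟫ ≤ g z := by
  have hslope : ∀ t ∈ Ioc (0 : ℝ) 1, t⁻¹ * (g (x + t • (z - x)) - g x) ≤ g z - g x := by
    rintro t ⟨ht₀, ht₁⟩
    have h := hg.apply_add_smul_sub_le ht₀.le ht₁ x z
    rw [inv_mul_le_iff₀ ht₀]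
    linarith
  have := le_of_tendsto (hG.tendsto_slope_zero_right (z - x))
    (eventually_of_mem (Ioc_mem_nhdsGT one_pos) hslope)
  linarith

lemma subgradient_add_iff_of_hasGradientAt [CompleteSpace F] {f g h : F → ℝ} {G w x : F}
    (hf : ∀ z, f z = g z + h z) (hg : ConvexOn ℝ univ g) (hG : HasGradientAt g G x)
    (hh : ConvexOn ℝ univ h) :
    (∀ z, f x + ⟪w, z - x⟫ ≤ f z) ↔ ∀ z, h x + ⟪w - G, z - x⟫ ≤ h z := by
  simp only [hf, inner_sub_left]
  constructor
  · intro hw z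
    have hslope : ∀ t ∈ Ioc (0 : ℝ) 1,
        ⟪w, z - x⟫ - (h z - h x) ≤ t⁻¹ * (g (x + t • (z - x)) - g x) := by
      rintro t ⟨ht₀, ht₁⟩
      have hwt := hw (x + t • (z - x))
      rw [add_sub_cancel_left, inner_smul_right] at hwt
      have hht := hh.apply_add_smul_sub_le ht₀.le ht₁ x z
      rw [le_inv_mul_iff₀ ht₀]
      nlinarith
    have := ge_of_tendsto (hG.tendsto_slope_zero_right (z - x))
      (eventually_of_mem (Ioc_mem_nhdsGT one_pos) hslope)
    linarith
  · intro hs z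
    linarith [hg.add_inner_le_of_hasGradientAt hG z, hs z]

lemma StrongConvexOn.add_inner_add_sq_le {f : F → ℝ} {m : ℝ} {v x : F}
    (hf : StrongConvexOn univ m f) (hv : ∀ z, f x + ⟪v, z - x⟫ ≤ f z) (z : F) :
    f x + ⟪v, z - x⟫ + m / 2 * ‖z - x‖ ^ 2 ≤ f z := by
  have hbound : ∀ t ∈ Ioc (0 : ℝ) 1,
      ⟪v, z - x⟫ ≤ f z - f x - m / 2 * ((1 - t) * ‖z - x‖ ^ 2) := by
    rintro t ⟨ht₀, ht₁⟩
    have h := hf.apply_add_smul_sub_le ht₀.le ht₁ x z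
    have hsub := hv (x + t • (z - x))
    rw [add_sub_cancel_left, inner_smul_right] at hsub
    nlinarith
  have hlim : Tendsto (fun t : ℝ => f z - f x - m / 2 * ((1 - t) * ‖z - x‖ ^ 2)) (𝓝[>] 0)
      (𝓝 (f z - f x - m / 2 * ‖z - x‖ ^ 2)) :=
    tendsto_nhdsWithin_of_tendsto_nhds (Continuous.tendsto' (by fun_prop) _ _ (by ring))
  have := ge_of_tendsto hlim (eventually_of_mem (Ioc_mem_nhdsGT one_pos) hbound)
  linarith

lemma StrongConvexOn.sub_le_norm_sq_div {f : F → ℝ} {m : ℝ} {v x : F}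
    (hf : StrongConvexOn univ m f) (hm : 0 < m) (hv : ∀ z, f x + ⟪v, z - x⟫ ≤ f z) (y : F) :
    f x - f y ≤ ‖v‖ ^ 2 / (2 * m) := by
  have h := hf.add_inner_add_sq_le hv y
  have hcs := neg_le_of_abs_le (abs_real_inner_le_norm v (y - x))
  rw [le_div_iff₀ (by positivity)]
  nlinarith [sq_nonneg (m * ‖y - x‖ - ‖v‖)]

lemma le_add_inner_add_of_lipschitz_gradient [CompleteSpace F] {g : F → ℝ} {g' : F → F} {L : ℝ}
    (hg' : ∀ z, HasGradientAt g (g' z) z) (hLip : ∀ a b, ‖g' a - g' b‖ ≤ L * ‖a - b‖) (x y : F) :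
    g y ≤ g x + ⟪g' x, y - x⟫ + L / 2 * ‖y - x‖ ^ 2 := by
  set d := y - x
  set φ : ℝ → ℝ := fun t => g (x + t • d) - t * ⟪g' x, d⟫ - L / 2 * t ^ 2 * ‖d‖ ^ 2
  have hφ' : ∀ t, HasDerivAt φ (⟪g' (x + t • d) - g' x, d⟫ - L * t * ‖d‖ ^ 2) t := by
    intro t
    have hline : HasDerivAt (fun t : ℝ => x + t • d) d t :=
      ((hasDerivAt_id t).smul_const d).const_add x |>.congr_deriv (one_smul ℝ d)
    have hgline : HasDerivAt (fun t : ℝ => g (x + t • d)) ⟪g' (x + t • d), d⟫ t :=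
      ((hg' (x + t • d)).hasFDerivAt.comp_hasDerivAt t hline :)
    refine ((hgline.sub ((hasDerivAt_id t).mul_const ⟪g' x, d⟫)).sub
      (((hasDerivAt_pow 2 t).const_mul (L / 2)).mul_const (‖d‖ ^ 2))).congr_deriv ?_
    simp only [inner_sub_left, one_mul]
    ring
  have hanti : AntitoneOn φ (Icc 0 1) := by
    refine antitoneOn_of_hasDerivWithinAt_nonpos (convex_Icc 0 1)
      (HasDerivAt.continuousOn fun t _ => hφ' t) (fun t _ => (hφ' t).hasDerivWithinAt) ?_
    intro t ht
    rw [interior_Icc] at ht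
    have hstep : ‖g' (x + t • d) - g' x‖ ≤ L * (t * ‖d‖) := by
      simpa [norm_smul, abs_of_pos ht.1] using hLip (x + t • d) x
    have := real_inner_le_norm (g' (x + t • d) - g' x) d
    nlinarith [mul_le_mul_of_nonneg_right hstep (norm_nonneg d)]
  have h := hanti (left_mem_Icc.2 zero_le_one) (right_mem_Icc.2 zero_le_one) zero_le_one
  simp only [φ, one_smul, zero_smul, add_zero, show x + d = y from add_sub_cancel x y] at h
  linarith

lemma sub_smul_add_inner_le_of_lipschitz_gradient [CompleteSpace F] {g : F → ℝ} {g' : F → F}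
    {L : ℝ} (hg' : ∀ z, HasGradientAt g (g' z) z) (hLip : ∀ a b, ‖g' a - g' b‖ ≤ L * ‖a - b‖)
    (hL : 0 < L) (x v : F) :
    g (x - (1 / L) • v) + ⟪v - g' x, x - (1 / L) • v⟫
      ≤ g x + ⟪v - g' x, x⟫ - ‖v‖ ^ 2 / (2 * L) := by
  have hdesc := le_add_inner_add_of_lipschitz_gradient hg' hLip x (x - (1 / L) • v)
  rw [sub_sub_cancel_left, inner_neg_right, inner_smul_right, norm_neg, norm_smul,
    Real.norm_of_nonneg (one_div_pos.2 hL).le] at hdesc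
  have hquad : L / 2 * (1 / L * ‖v‖) ^ 2 = ‖v‖ ^ 2 / (2 * L) := by field_simp
  have hnorm : ⟪g' x, v⟫ + ⟪v - g' x, v⟫ = ‖v‖ ^ 2 := by
    rw [← inner_add_left, add_sub_cancel, real_inner_self_eq_norm_sq]
  rw [inner_sub_right, inner_smul_right]
  linear_combination hdesc + hquad - (1 / L) * hnorm

end InnerProductSpace

lemma Real.nonneg_of_sign_nonneg {r : ℝ} (h : 0 ≤ Real.sign r) : 0 ≤ r :=
  not_lt.1 fun hr => by rw [Real.sign_of_neg hr] at h; norm_num at h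

lemma abs_subgradient_iff {γ a c : ℝ} (hγ : 0 ≤ γ) :
    (∀ b, γ * |a| + c * (b - a) ≤ γ * |b|) ↔ |c| ≤ γ ∧ c * a = γ * |a| := by
  constructor
  · intro h
    have hup := h (a + 1)
    have hdown := h (a - 1)
    have hzero := h 0
    have h₁ : |a + 1| ≤ |a| + 1 := by simpa using abs_add_le a 1
    have h₂ : |a - 1| ≤ |a| + 1 := by simpa using abs_sub a 1
    have hc : |c| ≤ γ := abs_le.2 ⟨by nlinarith, by nlinarith⟩
    have hca : c * a ≤ γ * |a| :=
      (le_abs_self _).trans (by rw [abs_mul]; exact mul_le_mul_of_nonneg_right hc (abs_nonneg a))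
    rw [zero_sub, abs_zero, mul_zero] at hzero
    exact ⟨hc, by linarith⟩
  · rintro ⟨hc, hca⟩ b
    have : c * b ≤ γ * |b| :=
      (le_abs_self _).trans (by rw [abs_mul]; exact mul_le_mul_of_nonneg_right hc (abs_nonneg b))
    linarith

section EuclideanSpace

variable {ι : Type*} [Fintype ι]

lemma EuclideanSpace.inner_eq_sum_mul (x y : EuclideanSpace ℝ ι) : ⟪x, y⟫ = ∑ i, x i * y i := by
  simp [PiLp.inner_apply, mul_comm]

lemma EuclideanSpace.sum_abs_add_single [DecidableEq ι] (x : EuclideanSpace ℝ ι) (i : ι) (δ : ℝ) :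
    ∑ j, |(x + EuclideanSpace.single i δ) j| = ∑ j, |x j| + (|x i + δ| - |x i|) := by
  rw [← sub_eq_iff_eq_add', ← Finset.sum_sub_distrib]
  rw [Finset.sum_eq_single i (fun j _ hj => by simp [hj]) (by simp)]
  simp

lemma sum_abs_eq_inner_of_mul_eq {γ : ℝ} {s y : EuclideanSpace ℝ ι}
    (h : ∀ i, s i * y i = γ * |y i|) : γ * ∑ i, |y i| = ⟪s, y⟫ := by
  simp [EuclideanSpace.inner_eq_sum_mul, h, Finset.mul_sum]

lemma convexOn_const_mul_sum_abs {γ : ℝ} (hγ : 0 ≤ γ) :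
    ConvexOn ℝ univ (fun z : EuclideanSpace ℝ ι => γ * ∑ i, |z i|) := by
  refine ⟨convex_univ, fun a _ b _ p q hp hq _ => ?_⟩
  simp only [smul_eq_mul, PiLp.add_apply, PiLp.smul_apply, Finset.mul_sum,
    ← Finset.sum_add_distrib]
  gcongr with i
  calc γ * |p * a i + q * b i| ≤ γ * (|p * a i| + |q * b i|) := by gcongr; exact abs_add_le _ _
    _ = p * (γ * |a i|) + q * (γ * |b i|) := by
      rw [abs_mul, abs_mul, abs_of_nonneg hp, abs_of_nonneg hq]; ring

end EuclideanSpace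

lemma mem_subdiff_l1_iff {n : ℕ} {γ : ℝ} (hγ : 0 ≤ γ) (x s : E n) :
    s ∈ subdiff (fun z : E n => γ * ∑ i, |z i|) x ↔ ∀ i, |s i| ≤ γ ∧ s i * x i = γ * |x i| := by
  simp_rw [← abs_subgradient_iff hγ]
  constructor
  · intro hs i b
    have h := hs (x + EuclideanSpace.single i (b - x i))
    dsimp only at h
    rw [EuclideanSpace.sum_abs_add_single, add_sub_cancel_left,
      EuclideanSpace.inner_single_right] at h
    simp only [add_sub_cancel, conj_trivial] at h
    linarith
  · intro hs z
    have h := Finset.sum_le_sum fun i (_ : i ∈ Finset.univ) => hs i (z i)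
    simp only [Finset.sum_add_distrib, ← Finset.mul_sum] at h
    simp only [ge_iff_le, EuclideanSpace.inner_eq_sum_mul, PiLp.sub_apply]
    linarith

lemma mem_subdiff_add_l1_iff {n : ℕ} {f g : E n → ℝ} {G x : E n} {γ : ℝ}
    (hf : ∀ z, f z = g z + γ * ∑ i, |z i|) (hg : ConvexOn ℝ univ g) (hG : HasGradientAt g G x)
    (hγ : 0 ≤ γ) (w : E n) :
    w ∈ subdiff f x ↔ ∀ i, |(w - G) i| ≤ γ ∧ (w - G) i * x i = γ * |x i| :=
  (subgradient_add_iff_of_hasGradientAt hf hg hG (convexOn_const_mul_sum_abs hγ)).trans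
    (mem_subdiff_l1_iff hγ x _)

lemma mul_eq_neg_mul_abs_of_forall_sq_le {γ s v : ℝ} (hs : |s| ≤ γ)
    (h : ∀ c, |c| ≤ γ → v ^ 2 ≤ (v - s + c) ^ 2) : s * v = -(γ * |v|) := by
  obtain ⟨hs₁, hs₂⟩ := abs_le.1 hs
  rcases lt_trichotomy v 0 with hv | rfl | hv
  · have : s = γ := by
      by_contra hne
      rcases le_or_gt (s - v) γ with h' | h'
      · nlinarith [h (s - v) (abs_le.2 ⟨by linarith, h'⟩)]
      · nlinarith [h γ (abs_le.2 ⟨by linarith, le_rfl⟩), lt_of_le_of_ne hs₂ hne]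
    rw [this, abs_of_neg hv]; ring
  · simp
  · have : s = -γ := by
      by_contra hne
      rcases le_or_gt (-γ) (s - v) with h' | h'
      · nlinarith [h (s - v) (abs_le.2 ⟨h', by linarith⟩)]
      · nlinarith [h (-γ) (abs_le.2 ⟨le_rfl, by linarith⟩), lt_of_le_of_ne hs₁ (Ne.symm hne)]
    rw [this, abs_of_pos hv]; ring

lemma IsMinNormSubgrad.sub_mul_eq_neg_mul_abs {n : ℕ} {f : E n → ℝ} {x v G : E n} {γ : ℝ}
    (hchar : ∀ w, w ∈ subdiff f x ↔ ∀ i, |(w - G) i| ≤ γ ∧ (w - G) i * x i = γ * |x i|)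
    (hv : IsMinNormSubgrad f x v) {i : Fin n} (hxi : x i = 0) :
    (v - G) i * v i = -(γ * |v i|) := by
  have hs := (hchar v).1 hv.1
  refine mul_eq_neg_mul_abs_of_forall_sq_le (hs i).1 fun c hc => ?_
  set δ := c - (v - G) i
  have hw : v + EuclideanSpace.single i δ ∈ subdiff f x := by
    rw [hchar]
    intro j
    by_cases hj : j = i
    · subst hj
      simp only [δ, hxi, mul_zero, abs_zero, and_true, PiLp.sub_apply, PiLp.add_apply,
        PiLp.single_apply, if_true]
      convert hc using 2
      ring
    · simpa [hj] using hs j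
  have hnorm := pow_le_pow_left₀ (norm_nonneg _) (hv.2 _ hw) 2
  rw [norm_add_sq_real, EuclideanSpace.inner_single_right, PiLp.norm_single] at hnorm
  simp only [conj_trivial, Real.norm_eq_abs, sq_abs] at hnorm
  nlinarith

lemma mul_eq_mul_abs_of_mul_nonneg {γ a b c : ℝ} (hca : c * a = γ * |a|)
    (ha : a ≠ 0) (hab : 0 ≤ b * a) : c * b = γ * |b| := by
  rcases ha.lt_or_gt with ha | ha
  · have : c = -γ := mul_right_cancel₀ ha.ne (by rw [hca, abs_of_neg ha]; ring)
    rw [this, abs_of_nonpos (nonpos_of_mul_nonneg_left hab ha)]; ring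
  · have : c = γ := mul_right_cancel₀ ha.ne' (by rw [hca, abs_of_pos ha])
    rw [this, abs_of_nonneg (nonneg_of_mul_nonneg_left hab ha)]

lemma IsMinNormSubgrad.sub_mul_sub_smul_eq {n : ℕ} {f : E n → ℝ} {x v G : E n} {γ h : ℝ}
    (hchar : ∀ w, w ∈ subdiff f x ↔ ∀ i, |(w - G) i| ≤ γ ∧ (w - G) i * x i = γ * |x i|)
    (hv : IsMinNormSubgrad f x v) (hh : 0 < h) (hsign : ∀ i, 0 ≤ (x i - h * v i) * x i)
    (i : Fin n) :
    (v - G) i * (x i - h * v i) = γ * |x i - h * v i| := by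
  by_cases hxi : x i = 0
  · have hvi := hv.sub_mul_eq_neg_mul_abs hchar hxi
    rw [hxi, zero_sub, abs_neg, abs_mul, abs_of_pos hh]
    linear_combination (-h) * hvi
  · exact mul_eq_mul_abs_of_mul_nonneg (((hchar v).1 hv.1) i).2 hxi (hsign i)

theorem stmt_8_general {n : ℕ} (g : E n → ℝ)
    (μ L γ : ℝ) (hμ : 0 < μ) (hμL : μ < L) (hγ : 0 < γ)
    (hsc : StronglyConvex μ g)
    (g' : E n → E n) (hg' : ∀ z, HasGradientAt g (g' z) z)
    (hLip : ∀ a b, ‖g' a - g' b‖ ≤ L * ‖a - b‖)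
    (f : E n → ℝ) (hf : ∀ z, f z = g z + γ * ∑ i, |z i|)
    (x xstar v : E n) (hv : IsMinNormSubgrad f x v)
    (hsign : ∀ i, 0 ≤ Real.sign ((x i - (1 / L) * v i) * x i)) :
    f (x - (1 / L) • v) - f xstar ≤ (1 - μ / L) * (f x - f xstar) := by
  have hL : 0 < L := hμ.trans hμL
  have hg_strong : StrongConvexOn univ μ g := strongConvexOn_iff_convex.2 hsc
  have hchar := mem_subdiff_add_l1_iff hf (hg_strong.convexOn fun r => by positivity) (hg' x) hγ.le
  have hs : ∀ i, (v - g' x) i * x i = γ * |x i| := fun i => ((hchar v).1 hv.1 i).2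
  have hsy : ∀ i, (v - g' x) i * (x - (1 / L) • v) i = γ * |(x - (1 / L) • v) i| :=
    hv.sub_mul_sub_smul_eq hchar (one_div_pos.2 hL) fun i => Real.nonneg_of_sign_nonneg (hsign i)
  have hdecrease : f (x - (1 / L) • v) ≤ f x - ‖v‖ ^ 2 / (2 * L) := by
    rw [hf, hf, sum_abs_eq_inner_of_mul_eq hsy, sum_abs_eq_inner_of_mul_eq hs]
    exact sub_smul_add_inner_le_of_lipschitz_gradient hg' hLip hL x v
  have hPL : f x - f xstar ≤ ‖v‖ ^ 2 / (2 * μ) := by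
    have hf_strong : StrongConvexOn univ μ f := by
      convert hg_strong.add_convexOn (convexOn_const_mul_sum_abs (ι := Fin n) hγ.le)
      exact funext hf
    exact hf_strong.sub_le_norm_sq_div hμ hv.1 xstar
  have hPL' : μ / L * (f x - f xstar) ≤ ‖v‖ ^ 2 / (2 * L) :=
    calc μ / L * (f x - f xstar) ≤ μ / L * (‖v‖ ^ 2 / (2 * μ)) := by gcongr
      _ = ‖v‖ ^ 2 / (2 * L) := by field_simp
  linarith

theorem stmt_8 {n : ℕ} (g : E n → ℝ) (hg1 : ContDiff ℝ 1 g)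
    (μ L γ : ℝ) (hμ : 0 < μ) (hμL : μ < L) (hγ : 0 < γ)
    (hsc : StronglyConvex μ g)
    (g' : E n → E n) (hg' : ∀ z, HasGradientAt g (g' z) z)
    (hLip : ∀ a b, ‖g' a - g' b‖ ≤ L * ‖a - b‖)
    (f : E n → ℝ) (hf : ∀ z, f z = g z + γ * ∑ i, |z i|)
    (x xstar v : E n) (hv : IsMinNormSubgrad f x v)
    (hmin : ∀ z, f xstar ≤ f z)
    (hsign : ∀ i, 0 ≤ Real.sign ((x i - (1 / L) * v i) * x i)) :
    f (x - (1 / L) • v) - f xstar ≤ (1 - μ / L) * (f x - f xstar) :=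
  stmt_8_general g μ L γ hμ hμL hγ hsc g' hg' hLip f hf x xstar v hv hsign
end
end

section
/- In the setting of Algorithm 1 with step h = 1/L and a sign-crossing step, let x' be the projected point (components in I set to 0, others equal to xᵢᵏ). Then f(x') ≤ f(xᵏ) − Σ_{i∈ξ⁰} (hηᵢ − (L/2)h²ηᵢ²) |∂ᵢ⁻f(xᵏ)|², where ηᵢ ∈ [0,1] is as defined via ηᵢ = xᵢᵏ/(h∂ᵢ⁻f(xᵏ)) when ∂ᵢ⁻f(xᵏ) ≠ 0 and ηᵢ = 0 otherwise. In particular f(x') ≤ f(xᵏ). -/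
open scoped RealInnerProductSpace BigOperators
open scoped Classical

noncomputable section

/-!
Zeroing the coordinates in `ξ⁰` is controlled by the descent lemma for `g`, plus the exact change
`-γ ∑_{ξ⁰} |xᵢ|` of the `ℓ¹` term. Where `xᵢ ≠ 0`, `f` is differentiable along `eᵢ`, so every
subgradient satisfies `vᵢ = ∂ᵢg(x) + γ sign xᵢ`, i.e. `(vᵢ - ∂ᵢg(x)) xᵢ = γ |xᵢ|` for all `i`.
The increase is therefore at most `∑_{ξ⁰} (L/2 xᵢ² - vᵢ xᵢ)`. On `ξ⁰` we have `xᵢ = ηᵢ h vᵢ`,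
turning each term into `-(h ηᵢ - L/2 h² ηᵢ²) vᵢ²`, and `(xᵢ - h vᵢ) xᵢ ≤ 0` makes it nonpositive.
-/

open Finset

section LipschitzGradient

variable {F : Type*} [NormedAddCommGroup F] [InnerProductSpace ℝ F] [CompleteSpace F]

theorem HasGradientAt.hasDerivAt_add_smul {g : F → ℝ} {a x d : F} {t : ℝ}
    (hg : HasGradientAt g a (x + t • d)) :
    HasDerivAt (fun s : ℝ => g (x + s • d)) ⟪a, d⟫ t := by
  have hline : HasDerivAt (fun s : ℝ => x + s • d) d t := by
    simpa using ((hasDerivAt_id t).smul_const d).const_add x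
  have h := (hasGradientAt_iff_hasFDerivAt.mp hg).comp_hasDerivAt t hline
  simp only [InnerProductSpace.toDual_apply_apply] at h
  exact h

theorem apply_le_of_lipschitz_gradient {g : F → ℝ} {g' : F → F} {L : ℝ}
    (hg : ∀ z, HasGradientAt g (g' z) z) (hLip : ∀ a b, ‖g' a - g' b‖ ≤ L * ‖a - b‖)
    (x y : F) :
    g y ≤ g x + ⟪g' x, y - x⟫ + L / 2 * ‖y - x‖ ^ 2 := by
  set d := y - x
  let φ : ℝ → ℝ := fun t => g (x + t • d) - t * ⟪g' x, d⟫ - L / 2 * t ^ 2 * ‖d‖ ^ 2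
  have hφ : ∀ t, HasDerivAt φ (⟪g' (x + t • d) - g' x, d⟫ - L * t * ‖d‖ ^ 2) t := by
    intro t
    have hsq := ((hasDerivAt_pow 2 t).const_mul (L / 2)).mul_const (‖d‖ ^ 2)
    refine (((hg _).hasDerivAt_add_smul.sub (hasDerivAt_mul_const _)).sub hsq).congr_deriv ?_
    rw [inner_sub_left]
    push_cast
    ring
  have hφ' : ∀ t ∈ interior (Set.Icc (0 : ℝ) 1),
      ⟪g' (x + t • d) - g' x, d⟫ - L * t * ‖d‖ ^ 2 ≤ 0 := by
    intro t ht
    rw [interior_Icc] at ht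
    refine sub_nonpos.mpr ?_
    calc ⟪g' (x + t • d) - g' x, d⟫ ≤ ‖g' (x + t • d) - g' x‖ * ‖d‖ := real_inner_le_norm _ _
      _ ≤ L * ‖t • d‖ * ‖d‖ := by
          gcongr
          simpa using hLip (x + t • d) x
      _ = L * t * ‖d‖ ^ 2 := by rw [norm_smul, Real.norm_of_nonneg ht.1.le]; ring
  have hanti : AntitoneOn φ (Set.Icc 0 1) :=
    antitoneOn_of_hasDerivWithinAt_nonpos (convex_Icc 0 1)
      (fun t _ => (hφ t).continuousAt.continuousWithinAt)
      (fun t _ => (hφ t).hasDerivWithinAt) hφ'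
  have h10 := hanti (Set.left_mem_Icc.mpr zero_le_one) (Set.right_mem_Icc.mpr zero_le_one)
    zero_le_one
  simp only [φ, one_smul, zero_smul, add_zero, one_pow, mul_one, one_mul, zero_mul, sub_zero,
    ne_eq, OfNat.ofNat_ne_zero, not_false_eq_true, zero_pow, mul_zero, d, add_sub_cancel] at h10
  linarith

end LipschitzGradient

theorem inner_eq_of_subgradient_of_hasDerivAt {F : Type*} [NormedAddCommGroup F]
    [InnerProductSpace ℝ F] {f : F → ℝ} {x v d : F} {a : ℝ}
    (hv : ∀ z, f x + ⟪v, z - x⟫ ≤ f z) (hf : HasDerivAt (fun t : ℝ => f (x + t • d)) a 0) :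
    ⟪v, d⟫ = a := by
  have hmin : IsLocalMin (fun t : ℝ => f (x + t • d) - t * ⟪v, d⟫) 0 := by
    refine IsMinOn.isLocalMin (s := Set.univ) (fun t _ => ?_) Filter.univ_mem
    have h := hv (x + t • d)
    simp only [add_sub_cancel_left, inner_smul_right] at h
    show f (x + (0 : ℝ) • d) - 0 * ⟪v, d⟫ ≤ f (x + t • d) - t * ⟪v, d⟫
    rw [zero_smul, add_zero, zero_mul, sub_zero]
    linarith
  linarith [hmin.hasDerivAt_eq_zero (hf.sub (hasDerivAt_mul_const ⟪v, d⟫))]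

section EuclideanL1

variable {ι : Type*} [Fintype ι] [DecidableEq ι]

theorem hasDerivAt_sum_abs_add_smul_single {x : EuclideanSpace ℝ ι} {i : ι} (hx : x i ≠ 0) :
    HasDerivAt (fun t : ℝ => ∑ j, |(x + t • EuclideanSpace.single i (1 : ℝ)) j|)
      (SignType.sign (x i) : ℝ) 0 := by
  have hsum : (fun t : ℝ => ∑ j, |(x + t • EuclideanSpace.single i (1 : ℝ)) j|)
      = fun t => |t + x i| + (∑ j, |x j| - |x i|) := by
    funext t
    rw [← sum_erase_add _ _ (mem_univ i), ← sum_erase_add _ _ (mem_univ i)]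
    have hoff : ∀ j ∈ univ.erase i, |(x + t • EuclideanSpace.single i (1 : ℝ)) j| = |x j| :=
      fun j hj => by simp [ne_of_mem_erase hj]
    rw [sum_congr rfl hoff]
    simp [add_comm]
  rw [hsum]
  have habs : HasDerivAt (fun t : ℝ => |t + x i|) (SignType.sign (x i) : ℝ) 0 :=
    HasDerivAt.comp_add_const 0 (x i) (by rw [zero_add]; exact hasDerivAt_abs hx)
  exact habs.add_const _

theorem subgradient_sub_gradient_mul_self_eq {g f : EuclideanSpace ℝ ι → ℝ}
    {x v a : EuclideanSpace ℝ ι} {γ : ℝ} (hg : HasGradientAt g a x)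
    (hf : ∀ z, f z = g z + γ * ∑ i, |z i|) (hv : ∀ z, f x + ⟪v, z - x⟫ ≤ f z) (i : ι) :
    (v i - a i) * x i = γ * |x i| := by
  rcases eq_or_ne (x i) 0 with hx | hx
  · simp [hx]
  have hderiv : HasDerivAt (fun t : ℝ => f (x + t • EuclideanSpace.single i (1 : ℝ)))
      (a i + γ * SignType.sign (x i)) 0 := by
    have hg0 : HasGradientAt g a (x + (0 : ℝ) • EuclideanSpace.single i (1 : ℝ)) := by
      simpa using hg
    simp only [hf]
    refine (hg0.hasDerivAt_add_smul.add
      ((hasDerivAt_sum_abs_add_smul_single hx).const_mul γ)).congr_deriv ?_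
    simp [EuclideanSpace.inner_single_right]
  have hvi := inner_eq_of_subgradient_of_hasDerivAt hv hderiv
  simp only [EuclideanSpace.inner_single_right, one_mul, conj_trivial] at hvi
  rw [hvi, ← sign_mul_self (x i)]
  ring

theorem apply_le_add_sum_of_zero_on {g f : EuclideanSpace ℝ ι → ℝ}
    {g' : EuclideanSpace ℝ ι → EuclideanSpace ℝ ι} {L γ : ℝ}
    (hg : ∀ z, HasGradientAt g (g' z) z) (hLip : ∀ a b, ‖g' a - g' b‖ ≤ L * ‖a - b‖)
    (hf : ∀ z, f z = g z + γ * ∑ i, |z i|) {x x' v : EuclideanSpace ℝ ι}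
    (hv : ∀ z, f x + ⟪v, z - x⟫ ≤ f z) (S : Finset ι)
    (hx' : ∀ i, x' i = if i ∈ S then 0 else x i) :
    f x' ≤ f x + ∑ i ∈ S, (L / 2 * x i ^ 2 - v i * x i) := by
  have hdesc := apply_le_of_lipschitz_gradient hg hLip x x'
  have hcoord : ∀ i, g' x i * (x' i - x i) + L / 2 * (x' i - x i) ^ 2 + γ * (|x' i| - |x i|)
      = if i ∈ S then L / 2 * x i ^ 2 - v i * x i else 0 := by
    intro i
    have hvi := subgradient_sub_gradient_mul_self_eq (hg x) hf hv i
    rw [hx' i]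
    split_ifs
    · simp only [abs_zero, zero_sub, neg_sq]
      linarith
    · ring
  have hinner : ⟪g' x, x' - x⟫ = ∑ i, g' x i * (x' i - x i) := by
    simp [PiLp.inner_apply, mul_comm]
  have hnorm : ‖x' - x‖ ^ 2 = ∑ i, (x' i - x i) ^ 2 := by
    simp [EuclideanSpace.norm_sq_eq]
  have hsum := sum_ite_mem univ S (fun i => L / 2 * x i ^ 2 - v i * x i)
  rw [univ_inter, ← sum_congr rfl (fun i _ => hcoord i), sum_add_distrib, sum_add_distrib,
    ← mul_sum, ← mul_sum, sum_sub_distrib] at hsum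
  rw [hf, hf, ← hsum]
  rw [hinner, hnorm] at hdesc
  linarith

end EuclideanL1

theorem Real.sign_nonpos_iff {r : ℝ} : Real.sign r ≤ 0 ↔ r ≤ 0 := by
  rcases lt_trichotomy r 0 with hr | rfl | hr
  · simp [Real.sign_of_neg hr, hr.le]
  · simp
  · simp [Real.sign_of_pos hr, hr.not_ge]

theorem half_mul_sq_sub_mul_eq {L x v η : ℝ} (hL : L ≠ 0) (hcross : (x - 1 / L * v) * x ≤ 0)
    (hη : η = if v ≠ 0 then x / (1 / L * v) else 0) :
    L / 2 * x ^ 2 - v * x = -((1 / L * η - L / 2 * (1 / L) ^ 2 * η ^ 2) * v ^ 2) := by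
  rcases eq_or_ne v 0 with hv | hv
  · have hx : x = 0 := by simp only [hv, mul_zero, sub_zero] at hcross; nlinarith
    simp [hv, hx]
  · rw [hη, if_pos hv]
    field_simp
    ring

theorem half_mul_sq_sub_mul_nonpos {L x v : ℝ} (hL : 0 < L) (hcross : (x - 1 / L * v) * x ≤ 0) :
    L / 2 * x ^ 2 - v * x ≤ 0 := by
  have h : L * x ^ 2 ≤ v * x := by
    have := mul_le_mul_of_nonneg_left hcross hL.le
    field_simp at this
    nlinarith
  nlinarith [sq_nonneg x]

theorem stmt_12_general {n : ℕ} (g : E n → ℝ) (g' : E n → E n) (hg' : ∀ z, HasGradientAt g (g' z) z)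
    (L γ : ℝ) (hL : 0 < L)
    (hLip : ∀ a b, ‖g' a - g' b‖ ≤ L * ‖a - b‖)
    (f : E n → ℝ) (hf : ∀ z, f z = g z + γ * ∑ i, |z i|)
    (x x' v : E n) (hv : IsMinNormSubgrad f x v)
    (hx' : ∀ i, x' i = if Real.sign ((x i - (1 / L) * v i) * x i) ≤ 0 then 0 else x i)
    (η : Fin n → ℝ)
    (hη : ∀ i, η i = if v i ≠ 0 then x i / ((1 / L) * v i) else 0) :
    f x' ≤ f x - ∑ i ∈ Finset.univ.filter
        (fun i => Real.sign ((x i - (1 / L) * v i) * x i) ≤ 0),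
        ((1 / L) * η i - L / 2 * (1 / L) ^ 2 * (η i) ^ 2) * (v i) ^ 2 ∧
    f x' ≤ f x := by
  set S := Finset.univ.filter (fun i => Real.sign ((x i - (1 / L) * v i) * x i) ≤ 0)
  have hcross : ∀ i ∈ S, (x i - 1 / L * v i) * x i ≤ 0 := fun i hi =>
    Real.sign_nonpos_iff.mp (mem_filter.mp hi).2
  have hproj : f x' ≤ f x + ∑ i ∈ S, (L / 2 * x i ^ 2 - v i * x i) :=
    apply_le_add_sum_of_zero_on hg' hLip hf hv.1 S fun i => by simp [S, hx' i]
  have hgain : ∑ i ∈ S, (L / 2 * x i ^ 2 - v i * x i)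
      = -∑ i ∈ S, ((1 / L) * η i - L / 2 * (1 / L) ^ 2 * (η i) ^ 2) * (v i) ^ 2 := by
    rw [← sum_neg_distrib]
    exact sum_congr rfl fun i hi => half_mul_sq_sub_mul_eq hL.ne' (hcross i hi) (hη i)
  have hdescent : ∑ i ∈ S, (L / 2 * x i ^ 2 - v i * x i) ≤ 0 :=
    sum_nonpos fun i hi => half_mul_sq_sub_mul_nonpos hL (hcross i hi)
  constructor <;> linarith

theorem stmt_12 {n : ℕ} (g : E n → ℝ) (hgc : ConvexOn ℝ Set.univ g)
    (hg1 : ContDiff ℝ 1 g) (g' : E n → E n) (hg' : ∀ z, HasGradientAt g (g' z) z)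
    (L γ : ℝ) (hL : 0 < L) (hγ : 0 < γ)
    (hLip : ∀ a b, ‖g' a - g' b‖ ≤ L * ‖a - b‖)
    (f : E n → ℝ) (hf : ∀ z, f z = g z + γ * ∑ i, |z i|)
    (x x' v : E n) (hv : IsMinNormSubgrad f x v)
    (hx' : ∀ i, x' i = if Real.sign ((x i - (1 / L) * v i) * x i) ≤ 0 then 0 else x i)
    (η : Fin n → ℝ)
    (hη : ∀ i, η i = if v i ≠ 0 then x i / ((1 / L) * v i) else 0) :
    f x' ≤ f x - ∑ i ∈ Finset.univ.filter
        (fun i => Real.sign ((x i - (1 / L) * v i) * x i) ≤ 0),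
        ((1 / L) * η i - L / 2 * (1 / L) ^ 2 * (η i) ^ 2) * (v i) ^ 2 ∧
    f x' ≤ f x :=
  stmt_12_general g g' hg' L γ hL hLip f hf x x' v hv hx' η hη
end
end

section
/- In the setting of the sign-crossing case of Algorithm 1 with step h, let x' be the point with components x'ᵢ = xᵏᵢ for i ∉ ξ⁰ and x'ᵢ = 0 for i ∈ ξ⁰, and let v'' be defined by v''ᵢ = −h∂ᵢ⁻f(xᵏ) for i ∉ ξ⁰ and v''ᵢ = −h∂ᵢ⁻f(x') for i ∈ ξ⁰. Then |v'' + h∂⁻f(x')|₂² ≤ h²|∇g(xᵏ) − ∇g(x')|₂² ≤ h⁴L² Σ_{i∈ξ⁰} ηᵢ²|∂ᵢ⁻f(xᵏ)|². -/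
open scoped RealInnerProductSpace BigOperators
open scoped Classical

noncomputable section

/-!
If `y` is a subgradient of `f = g + γ‖·‖₁` at `w` and `w i ≠ 0`, then `f` is differentiable
along `eᵢ` at `w`, and `t ↦ f (w + t eᵢ) - t yᵢ` is minimal at `t = 0`; hence
`yᵢ = ∂ᵢg(w) + γ sign(wᵢ)`. Off `ξ⁰` the points `x` and `x'` share their nonzero `i`-th
coordinate, so `v''ᵢ + h v'ᵢ = h (∂ᵢg(x') - ∂ᵢg(x))`, while on `ξ⁰` this component vanishes.
The second bound is the Lipschitz bound on `∇g` together with `xᵢ = h ηᵢ vᵢ` on `ξ⁰`, which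
is `x - x'` read coordinatewise.
-/

open Finset

lemma hasDerivAt_abs_of_ne_zero {x : ℝ} (hx : x ≠ 0) : HasDerivAt (|·|) (Real.sign x) x := by
  rcases hx.lt_or_gt with hneg | hpos
  · simpa [Real.sign_of_neg hneg] using hasDerivAt_abs_neg hneg
  · simpa [Real.sign_of_pos hpos] using hasDerivAt_abs_pos hpos

lemma hasLineDerivAt_sum_abs {n : ℕ} {w u : E n} (hu : ∀ j, u j ≠ 0 → w j ≠ 0) :
    HasLineDerivAt ℝ (fun z : E n => ∑ j, |z j|) (∑ j, Real.sign (w j) * u j) w u := by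
  have hterm : ∀ j ∈ (univ : Finset (Fin n)),
      HasDerivAt (fun t : ℝ => |w j + t * u j|) (Real.sign (w j) * u j) 0 := by
    intro j _
    by_cases huj : u j = 0
    · simpa [huj] using hasDerivAt_const (0 : ℝ) |w j|
    · have hline : HasDerivAt (fun t : ℝ => w j + t * u j) (u j) 0 := by
        simpa using ((hasDerivAt_id (0 : ℝ)).mul_const (u j)).const_add (w j)
      exact (hasDerivAt_abs_of_ne_zero (hu j huj)).comp_of_eq 0 hline (by simp)
  unfold HasLineDerivAt
  simpa using HasDerivAt.fun_sum hterm

lemma inner_eq_of_mem_subdiff_of_hasLineDerivAt {n : ℕ} {f : E n → ℝ} {w y u : E n} {d : ℝ}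
    (hy : y ∈ subdiff f w) (hd : HasLineDerivAt ℝ f d w u) : ⟪y, u⟫ = d := by
  have hmin : IsLocalMin (fun t : ℝ => f (w + t • u) - t * ⟪y, u⟫) 0 :=
    Filter.Eventually.of_forall fun t => by
      have := hy (w + t • u)
      simp only [add_sub_cancel_left, inner_smul_right] at this
      simp only [zero_smul, add_zero, zero_mul, sub_zero]
      linarith
  have hderiv : HasDerivAt (fun t : ℝ => f (w + t • u) - t * ⟪y, u⟫) (d - ⟪y, u⟫) 0 := by
    simpa using HasDerivAt.fun_sub hd ((hasDerivAt_id (0 : ℝ)).mul_const ⟪y, u⟫)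
  linarith [hmin.hasDerivAt_eq_zero hderiv]

lemma apply_eq_of_mem_subdiff_add_l1 {n : ℕ} {g f : E n → ℝ} {g' w y : E n} {γ : ℝ}
    (hf : ∀ z, f z = g z + γ * ∑ j, |z j|) (hg : HasGradientAt g g' w)
    (hy : y ∈ subdiff f w) {i : Fin n} (hwi : w i ≠ 0) :
    y i = g' i + γ * Real.sign (w i) := by
  set e : E n := EuclideanSpace.single i 1
  have he : ∀ j, e j ≠ 0 → w j ≠ 0 := fun j hj => by
    obtain rfl : j = i := by by_contra hji; simp [e, hji] at hj
    exact hwi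
  have hd : HasLineDerivAt ℝ f (g' i + γ * Real.sign (w i)) w e := by
    have hg_line := hg.hasFDerivAt.hasLineDerivAt e
    have hl1 := hasLineDerivAt_sum_abs he
    unfold HasLineDerivAt at *
    simp only [hf]
    simpa [e, EuclideanSpace.inner_single_right] using hg_line.fun_add (hl1.const_mul γ)
  simpa [e, EuclideanSpace.inner_single_right] using
    inner_eq_of_mem_subdiff_of_hasLineDerivAt hy hd

lemma norm_le_norm_of_forall_abs_le {n : ℕ} {u w : E n} (h : ∀ i, |u i| ≤ |w i|) :
    ‖u‖ ≤ ‖w‖ := by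
  refine (sq_le_sq₀ (norm_nonneg u) (norm_nonneg w)).mp ?_
  simp only [EuclideanSpace.norm_sq_eq, Real.norm_eq_abs, sq_abs]
  exact sum_le_sum fun i _ => sq_le_sq.mpr (h i)

lemma eq_mul_of_sign_sub_mul_nonpos {x v h η : ℝ} (hs : Real.sign ((x - h * v) * x) ≤ 0)
    (hη : η = if v ≠ 0 then x / (h * v) else 0) : x = h * η * v := by
  by_cases hhv : h * v = 0
  · have hx : x = 0 := by
      by_contra hx
      rw [hhv, sub_zero, Real.sign_of_pos (mul_self_pos.mpr hx)] at hs
      norm_num at hs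
    rw [hx, mul_right_comm, hhv, zero_mul]
  · rw [hη, if_pos (right_ne_zero_of_mul hhv), mul_right_comm, mul_div_cancel₀ x hhv]

theorem stmt_13_general {n : ℕ} (g : E n → ℝ) (g' : E n → E n) (hg' : ∀ z, HasGradientAt g (g' z) z)
    (L γ : ℝ)
    (hLip : ∀ a b, ‖g' a - g' b‖ ≤ L * ‖a - b‖)
    (f : E n → ℝ) (hf : ∀ z, f z = g z + γ * ∑ i, |z i|)
    (h : ℝ)
    (x x' v v' v'' : E n)
    (hv : IsMinNormSubgrad f x v)
    (hx' : ∀ i, x' i = if Real.sign ((x i - h * v i) * x i) ≤ 0 then 0 else x i)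
    (hv' : IsMinNormSubgrad f x' v')
    (hv'' : ∀ i, v'' i = if Real.sign ((x i - h * v i) * x i) ≤ 0
        then -(h * v' i) else -(h * v i))
    (η : Fin n → ℝ)
    (hη : ∀ i, η i = if v i ≠ 0 then x i / (h * v i) else 0) :
    ‖v'' + h • v'‖ ^ 2 ≤ h ^ 2 * ‖g' x - g' x'‖ ^ 2 ∧
    h ^ 2 * ‖g' x - g' x'‖ ^ 2 ≤ h ^ 4 * L ^ 2 * ∑ i ∈ Finset.univ.filter
        (fun i => Real.sign ((x i - h * v i) * x i) ≤ 0),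
        (η i) ^ 2 * (v i) ^ 2 := by
  set ξ₀ := univ.filter fun i => Real.sign ((x i - h * v i) * x i) ≤ 0
  have hstep : ∀ i, i ∉ ξ₀ → (v'' + h • v') i = h * (g' x' i - g' x i) := by
    intro i hi
    have hs : ¬ Real.sign ((x i - h * v i) * x i) ≤ 0 := by simpa [ξ₀] using hi
    have hxi : x i ≠ 0 := fun h0 => hs (by simp [h0])
    have hx'i : x' i = x i := by rw [hx', if_neg hs]
    have hvi := apply_eq_of_mem_subdiff_add_l1 hf (hg' x) hv.1 hxi
    have hv'i := apply_eq_of_mem_subdiff_add_l1 hf (hg' x') hv'.1 (hx'i ▸ hxi)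
    rw [PiLp.add_apply, PiLp.smul_apply, smul_eq_mul, hv'', if_neg hs, hvi, hv'i, hx'i]
    ring
  have hstep₀ : ∀ i ∈ ξ₀, (v'' + h • v') i = 0 := by
    intro i hi
    have hs : Real.sign ((x i - h * v i) * x i) ≤ 0 := by simpa [ξ₀] using hi
    simp [hv'', if_pos hs]
  have hdist : ‖x - x'‖ ^ 2 = h ^ 2 * ∑ i ∈ ξ₀, η i ^ 2 * v i ^ 2 := by
    rw [EuclideanSpace.norm_sq_eq, mul_sum, sum_filter]
    refine sum_congr rfl fun i _ => ?_
    split_ifs with hs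
    · simp only [PiLp.sub_apply, hx', if_pos hs, sub_zero, Real.norm_eq_abs, sq_abs]
      rw [eq_mul_of_sign_sub_mul_nonpos hs (hη i)]
      ring
    · simp [hx', if_neg hs]
  constructor
  · calc ‖v'' + h • v'‖ ^ 2 ≤ ‖h • (g' x - g' x')‖ ^ 2 := by
          gcongr
          refine norm_le_norm_of_forall_abs_le fun i => ?_
          by_cases hi : i ∈ ξ₀
          · rw [hstep₀ i hi, abs_zero]
            positivity
          · rw [hstep i hi, PiLp.smul_apply, PiLp.sub_apply, smul_eq_mul, abs_mul, abs_mul,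
              abs_sub_comm]
      _ = h ^ 2 * ‖g' x - g' x'‖ ^ 2 := by rw [norm_smul, mul_pow, Real.norm_eq_abs, sq_abs]
  · calc h ^ 2 * ‖g' x - g' x'‖ ^ 2 ≤ h ^ 2 * (L * ‖x - x'‖) ^ 2 := by
          gcongr
          exact hLip x x'
      _ = h ^ 4 * L ^ 2 * ∑ i ∈ ξ₀, η i ^ 2 * v i ^ 2 := by rw [mul_pow, hdist]; ring

theorem stmt_13 {n : ℕ} (g : E n → ℝ) (hgc : ConvexOn ℝ Set.univ g)
    (hg1 : ContDiff ℝ 1 g) (g' : E n → E n) (hg' : ∀ z, HasGradientAt g (g' z) z)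
    (L γ : ℝ) (hL : 0 < L) (hγ : 0 < γ)
    (hLip : ∀ a b, ‖g' a - g' b‖ ≤ L * ‖a - b‖)
    (f : E n → ℝ) (hf : ∀ z, f z = g z + γ * ∑ i, |z i|)
    (h : ℝ) (hh : 0 < h)
    (x x' v v' v'' : E n)
    (hv : IsMinNormSubgrad f x v)
    (hx' : ∀ i, x' i = if Real.sign ((x i - h * v i) * x i) ≤ 0 then 0 else x i)
    (hv' : IsMinNormSubgrad f x' v')
    (hv'' : ∀ i, v'' i = if Real.sign ((x i - h * v i) * x i) ≤ 0
        then -(h * v' i) else -(h * v i))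
    (η : Fin n → ℝ)
    (hη : ∀ i, η i = if v i ≠ 0 then x i / (h * v i) else 0) :
    ‖v'' + h • v'‖ ^ 2 ≤ h ^ 2 * ‖g' x - g' x'‖ ^ 2 ∧
    h ^ 2 * ‖g' x - g' x'‖ ^ 2 ≤ h ^ 4 * L ^ 2 * ∑ i ∈ Finset.univ.filter
        (fun i => Real.sign ((x i - h * v i) * x i) ≤ 0),
        (η i) ^ 2 * (v i) ^ 2 :=
  stmt_13_general g g' hg' L γ hLip f hf h x x' v v' v'' hv hx' hv' hv'' η hη
end
end
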